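/- arXiv:0902.4806 — 2 statements merged into one kernel-verified Lean document; each statement's English description precedes it below -/
import Mathlib

section
/- Let σ > 0, μ ≥ 0, A > 0, and B, C be real with 2C + 4μσ + σ² > 0, and set ν = √(2C + 4μσ + σ²)/σ; assume ν is not an integer. Let f : (0,∞) → ℝ be differentiable and satisfy the Riccati equation σ x f'(x) − σ f(x) + (1/2) f(x)² = (1/2) A x² + B x + C for all x > 0, and let F : (0,∞) → ℝ be differentiable with F'(x) = f(x)/x. Fix y > 0 and real constants C₁, C₂, and define for t > 0, x > 0: p(t,x,y) = ( √A e^{(F(y) − F(x))/(2σ)} / (2σ sinh(√A t/2)) ) √(x/y) exp( −Bt/(2σ) − √A (x+y)/(2σ tanh(√A t/2)) ) · ( C₁ I_ν( √(Axy)/(σ sinh(√A t/2)) ) + C₂ I_{−ν}( √(Axy)/(σ sinh(√A t/2)) ) ). Then for all t > 0 and x > 0, ∂_t p = σ x ∂²_x p + f(x) ∂_x p − (μ/x) p. -/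
open Real MeasureTheory

/-- The modified Bessel function of the first kind,
`I_ν(z) = ∑_{k=0}^∞ (z/2)^{2k+ν} / (k! Γ(k+ν+1))`. -/
noncomputable def besselI (ν z : ℝ) : ℝ :=
  ∑' k : ℕ, (z / 2) ^ (2 * (k : ℝ) + ν) / ((Nat.factorial k : ℝ) * Real.Gamma ((k : ℝ) + ν + 1))

open Filter Topology Nat

/-!
Write `I_ρ(z) = (z/2)^ρ G_ρ(z²/4)` with the entire function `G_ρ(w) = ∑ w^k / (k! Γ(k+ρ+1))`,
which satisfies `G_ρ' = G_{ρ+1}` and the Bessel equation `G_ρ = w G_{ρ+2} + (ρ+1) G_{ρ+1}`.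
Up to the constant `√A e^{F(y)/(2σ)} / (2σ√y)`, each Bessel term of `p` is then a kernel
`sinh(√A t/2)⁻¹ γ^{ρ/2} e^{-Bt/(2σ)} · e^{-β(x+y)} x^{(ρ+1)/2} e^{-F(x)/(2σ)} · G_ρ(γ x)`
with `ρ = ±ν`, `β = √A coth(√A t/2)/(2σ)`, `u = -β' = A csch²(√A t/2)/(4σ)` and `γ = u y/σ`.
Every factor has an explicit logarithmic derivative, so both sides of the equation are
combinations of `G_ρ, G_{ρ+1}, G_{ρ+2}` at `γ x`; after the Bessel equation they agree by
`β² = A/(4σ²) + u/σ`, the Riccati equation and `ρ²σ² = 2C + 4μσ + σ²`.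
-/

-- Mathlib's `Gamma` vanishes at its poles, so `(Gamma s)⁻¹` is the entire function `1/Γ`.
lemma Real.inv_Gamma_eq_mul_inv_Gamma_add_one (s : ℝ) :
    (Gamma s)⁻¹ = s * (Gamma (s + 1))⁻¹ := by
  rcases eq_or_ne s 0 with rfl | hs
  · simp [Real.Gamma_zero]
  · rw [Real.Gamma_add_one hs, mul_inv, ← mul_assoc, mul_inv_cancel₀ hs, one_mul]

noncomputable def besselCoeff (ρ : ℝ) (k : ℕ) : ℝ := ((k ! : ℝ) * Gamma (k + ρ + 1))⁻¹

noncomputable def besselSeries (ρ w : ℝ) : ℝ := ∑' k : ℕ, besselCoeff ρ k * w ^ k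

lemma besselCoeff_eq_mul_besselCoeff_add_one (ρ : ℝ) (k : ℕ) :
    besselCoeff ρ k = (k + ρ + 1) * besselCoeff (ρ + 1) k := by
  rw [besselCoeff, besselCoeff, mul_inv, mul_inv, inv_Gamma_eq_mul_inv_Gamma_add_one]
  ring_nf

lemma succ_mul_besselCoeff_succ (ρ : ℝ) (k : ℕ) :
    (k + 1) * besselCoeff ρ (k + 1) = besselCoeff (ρ + 1) k := by
  rw [besselCoeff, besselCoeff, factorial_succ]
  push_cast
  rw [show (k : ℝ) + 1 + ρ + 1 = k + (ρ + 1) + 1 by ring, mul_assoc, mul_inv,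
    ← mul_assoc, mul_inv_cancel₀ (by positivity), one_mul]

lemma summable_abs_besselCoeff_mul_pow (ρ : ℝ) {r : ℝ} (hr : 0 ≤ r) :
    Summable fun k => |besselCoeff ρ k| * r ^ k := by
  obtain ⟨N, hN⟩ := exists_nat_ge (2 * r + |ρ|)
  refine summable_of_ratio_norm_eventually_le (r := 1 / 2) (by norm_num) ?_
  filter_upwards [eventually_ge_atTop N] with k hk
  have hk : 2 * r + |ρ| ≤ k := hN.trans (by exact_mod_cast hk)
  have hρ : 1 ≤ k + ρ + 1 := by linarith [neg_abs_le ρ]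
  have hrec : besselCoeff ρ k = ((k + 1) * (k + ρ + 1)) * besselCoeff ρ (k + 1) := by
    rw [besselCoeff_eq_mul_besselCoeff_add_one, ← succ_mul_besselCoeff_succ]; ring
  have hbig : 2 * r ≤ (k + 1) * (k + ρ + 1) := by nlinarith [abs_nonneg ρ]
  rw [norm_of_nonneg (by positivity), norm_of_nonneg (by positivity), hrec, abs_mul,
    abs_of_pos (by positivity : (0 : ℝ) < (k + 1) * (k + ρ + 1)), pow_succ]
  nlinarith [mul_le_mul_of_nonneg_left hbig
    (mul_nonneg (abs_nonneg (besselCoeff ρ (k + 1))) (pow_nonneg hr k))]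

lemma summable_besselCoeff_mul_pow (ρ w : ℝ) : Summable fun k => besselCoeff ρ k * w ^ k :=
  .of_norm <| by
    simpa only [norm_mul, norm_pow, Real.norm_eq_abs] using
      summable_abs_besselCoeff_mul_pow ρ (abs_nonneg w)

lemma summable_mul_besselCoeff_mul_pow_pred (ρ : ℝ) {r : ℝ} (hr : 0 ≤ r) :
    Summable fun k : ℕ => k * |besselCoeff ρ k| * r ^ (k - 1) := by
  rw [← summable_nat_add_iff 1]
  refine (summable_abs_besselCoeff_mul_pow (ρ + 1) hr).congr fun k => ?_
  rw [← succ_mul_besselCoeff_succ, abs_mul, abs_of_pos (by positivity : (0 : ℝ) < k + 1)]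
  simp [mul_assoc]

lemma tsum_mul_besselCoeff_mul_pow_pred (ρ w : ℝ) :
    ∑' k : ℕ, k * besselCoeff ρ k * w ^ (k - 1) = besselSeries (ρ + 1) w := by
  have hs : Summable fun k : ℕ => k * besselCoeff ρ k * w ^ (k - 1) := by
    refine .of_norm_bounded (summable_mul_besselCoeff_mul_pow_pred ρ (abs_nonneg w)) fun k => ?_
    simp
  rw [hs.tsum_eq_zero_add, besselSeries]
  simp only [Nat.cast_zero, zero_mul, zero_add, Nat.add_sub_cancel, Nat.cast_succ,
    succ_mul_besselCoeff_succ]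

lemma hasDerivAt_besselSeries (ρ w : ℝ) :
    HasDerivAt (besselSeries ρ) (besselSeries (ρ + 1) w) w := by
  have hR : (0 : ℝ) ≤ |w| + 1 := by positivity
  have hw : w ∈ Metric.ball (0 : ℝ) (|w| + 1) := by simp
  rw [← tsum_mul_besselCoeff_mul_pow_pred]
  refine hasDerivAt_tsum_of_isPreconnected (g := fun k z => besselCoeff ρ k * z ^ k)
    (g' := fun k z => k * besselCoeff ρ k * z ^ (k - 1))
    (summable_mul_besselCoeff_mul_pow_pred ρ hR) Metric.isOpen_ball
    (convex_ball _ _).isPreconnected (fun k z _ => ?_) (fun k z hz => ?_) hw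
    (summable_besselCoeff_mul_pow ρ w) hw
  · simpa [mul_assoc, mul_comm] using (hasDerivAt_pow k z).const_mul (besselCoeff ρ k)
  · have hz : |z| ≤ |w| + 1 := by simpa using (mem_ball_zero_iff.mp hz).le
    rw [norm_mul, norm_mul, norm_pow, Real.norm_natCast, Real.norm_eq_abs, Real.norm_eq_abs]
    gcongr

lemma besselSeries_eq_mul_add (ρ w : ℝ) :
    besselSeries ρ w = w * besselSeries (ρ + 2) w + (ρ + 1) * besselSeries (ρ + 1) w := by
  have hshift : ∀ k : ℕ, besselCoeff ρ k * w ^ k - (ρ + 1) * (besselCoeff (ρ + 1) k * w ^ k)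
      = w * (k * besselCoeff (ρ + 1) k * w ^ (k - 1)) := fun k => by
    rw [besselCoeff_eq_mul_besselCoeff_add_one]
    rcases k with _ | k
    · simp
    · push_cast; ring
  rw [← sub_eq_iff_eq_add, besselSeries, besselSeries, ← tsum_mul_left,
    ← (summable_besselCoeff_mul_pow ρ w).tsum_sub
      ((summable_besselCoeff_mul_pow _ w).mul_left _),
    tsum_congr hshift, tsum_mul_left, tsum_mul_besselCoeff_mul_pow_pred, add_assoc,
    one_add_one_eq_two]

lemma besselI_eq_rpow_mul_besselSeries (ρ : ℝ) {z : ℝ} (hz : 0 < z) :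
    besselI ρ z = (z / 2) ^ ρ * besselSeries ρ ((z / 2) ^ 2) := by
  rw [besselI, besselSeries, ← tsum_mul_left]
  refine tsum_congr fun k => ?_
  rw [besselCoeff, Real.rpow_add (by positivity),
    show 2 * (k : ℝ) = ((2 * k : ℕ) : ℝ) by push_cast; ring, Real.rpow_natCast, pow_mul]
  ring

lemma kernel_pde_coefficients {σ μ A B C ρ x y β u γ a d d' g₀ g₁ g₂ : ℝ}
    (hσ : σ ≠ 0) (hx : x ≠ 0)
    (hβ : β ^ 2 = A / (4 * σ ^ 2) + u / σ) (hγ : γ = u * y / σ)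
    (ha : a = (ρ + 1) / (2 * x) - β - d / (2 * σ * x))
    (hRic : σ * x * d' - σ * d + (1 / 2) * d ^ 2 = (1 / 2) * A * x ^ 2 + B * x + C)
    (hρ : ρ ^ 2 * σ ^ 2 = 2 * C + 4 * μ * σ + σ ^ 2)
    (hg : g₀ = γ * x * g₂ + (ρ + 1) * g₁) :
    (-((1 + ρ) * σ * β + B / (2 * σ)) + u * (x + y)) * g₀ - 2 * σ * β * γ * x * g₁
      = σ * x * ((a ^ 2 - (ρ + 1) / (2 * x ^ 2) - (d' * x - d) / (2 * σ * x ^ 2)) * g₀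
          + 2 * a * γ * g₁ + γ ^ 2 * g₂)
        + d * (a * g₀ + γ * g₁) - μ / x * g₀ := by
  have hβ' : β ^ 2 * (4 * σ ^ 2) = A + u * (4 * σ) := by rw [hβ]; field_simp
  have hγ' : γ * σ = u * y := by rw [hγ]; field_simp
  subst ha
  field_simp
  linear_combination 2 * g₀ * hRic - g₀ * hρ - g₀ * x ^ 2 * hβ' + 4 * σ ^ 2 * x * γ * hg
    - 4 * σ * x * g₀ * hγ'

section Kernel

variable {σ μ A B C ρ y t x : ℝ} {f F : ℝ → ℝ}

noncomputable def sinhHalf (A t : ℝ) : ℝ := sinh (√A * t / 2)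

noncomputable def cothCoeff (σ A t : ℝ) : ℝ := √A * cosh (√A * t / 2) / (2 * σ * sinhHalf A t)

noncomputable def cschSqCoeff (σ A t : ℝ) : ℝ := A / (4 * σ * sinhHalf A t ^ 2)

noncomputable def besselScale (σ A y t : ℝ) : ℝ := cschSqCoeff σ A t * y / σ

lemma sinhHalf_pos (hA : 0 < A) (ht : 0 < t) : 0 < sinhHalf A t :=
  sinh_pos_iff.mpr (by positivity)

lemma hasDerivAt_sinhHalf (A t : ℝ) :
    HasDerivAt (sinhHalf A) (√A / 2 * cosh (√A * t / 2)) t :=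
  (((hasDerivAt_id t).const_mul √A).div_const 2).sinh.congr_deriv (by simp [mul_comm])

lemma cothCoeff_sq (hσ : σ ≠ 0) (hA : 0 ≤ A) (hs : sinhHalf A t ≠ 0) :
    cothCoeff σ A t ^ 2 = A / (4 * σ ^ 2) + cschSqCoeff σ A t / σ := by
  rw [cothCoeff, cschSqCoeff, div_pow, mul_pow, sq_sqrt hA, cosh_sq, ← sinhHalf]
  field_simp
  ring

lemma hasDerivAt_cothCoeff (hσ : σ ≠ 0) (hA : 0 ≤ A) (hs : sinhHalf A t ≠ 0) :
    HasDerivAt (cothCoeff σ A) (-cschSqCoeff σ A t) t := by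
  have hcosh : HasDerivAt (fun τ => √A * cosh (√A * τ / 2)) (√A * (√A / 2 * sinhHalf A t)) t :=
    ((((hasDerivAt_id t).const_mul √A).div_const 2).cosh.const_mul √A).congr_deriv
      (by simp [sinhHalf, mul_comm])
  refine (hcosh.div ((hasDerivAt_sinhHalf A t).const_mul (2 * σ)) (by simp [hσ, hs])).congr_deriv ?_
  simp only [cschSqCoeff, sinhHalf] at hs ⊢
  field_simp
  linear_combination (-4 * √A ^ 2) * cosh_sq (√A * t / 2) - 4 * sq_sqrt hA

lemma hasDerivAt_besselScale (hσ : σ ≠ 0) (hs : sinhHalf A t ≠ 0) :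
    HasDerivAt (besselScale σ A y) (-(2 * σ * cothCoeff σ A t * besselScale σ A y t)) t := by
  have hsq : HasDerivAt (fun τ => 4 * σ * sinhHalf A τ ^ 2)
      (4 * σ * (2 * sinhHalf A t * (√A / 2 * cosh (√A * t / 2)))) t := by
    simpa using ((hasDerivAt_sinhHalf A t).pow 2).const_mul (4 * σ)
  refine (((hasDerivAt_const t A).div hsq (by simp [hσ, hs])).mul_const y).div_const σ
    |>.congr_deriv ?_
  simp only [besselScale, cschSqCoeff, cothCoeff]
  field_simp
  ring

lemma besselScale_pos (hσ : 0 < σ) (hA : 0 < A) (hy : 0 < y) (ht : 0 < t) :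
    0 < besselScale σ A y t := by
  have := sinhHalf_pos hA ht
  unfold besselScale cschSqCoeff
  positivity

noncomputable def timeFactor (σ A B ρ y t : ℝ) : ℝ :=
  (sinhHalf A t)⁻¹ * besselScale σ A y t ^ (ρ / 2) * exp (-(B * t) / (2 * σ))

noncomputable def spaceFactor (σ A ρ y : ℝ) (F : ℝ → ℝ) (t x : ℝ) : ℝ :=
  exp (-(cothCoeff σ A t * (x + y))) * x ^ ((ρ + 1) / 2) * exp (-F x / (2 * σ))

noncomputable def spaceRate (σ A ρ : ℝ) (f : ℝ → ℝ) (t x : ℝ) : ℝ :=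
  (ρ + 1) / (2 * x) - cothCoeff σ A t - f x / (2 * σ * x)

lemma hasDerivAt_timeFactor (hσ : σ ≠ 0) (hs : sinhHalf A t ≠ 0)
    (hγ : besselScale σ A y t ≠ 0) :
    HasDerivAt (timeFactor σ A B ρ y)
      (-((1 + ρ) * σ * cothCoeff σ A t + B / (2 * σ)) * timeFactor σ A B ρ y t) t := by
  have hinv := (hasDerivAt_sinhHalf A t).inv hs
  have hpow := (hasDerivAt_besselScale (y := y) hσ hs).rpow_const (p := ρ / 2) (Or.inl hγ)
  have hexp := ((((hasDerivAt_id t).const_mul B).fun_neg).div_const (2 * σ)).exp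
  refine ((hinv.fun_mul hpow).fun_mul hexp).congr_deriv ?_
  rw [Real.rpow_sub_one hγ]
  simp only [timeFactor, cothCoeff, id, Pi.inv_apply]
  field_simp
  ring

lemma hasDerivAt_spaceFactor_time (hσ : σ ≠ 0) (hA : 0 ≤ A) (hs : sinhHalf A t ≠ 0) :
    HasDerivAt (fun τ => spaceFactor σ A ρ y F τ x)
      (cschSqCoeff σ A t * (x + y) * spaceFactor σ A ρ y F t x) t := by
  have h := (((hasDerivAt_cothCoeff hσ hA hs).mul_const (x + y)).fun_neg.exp.mul_const
    (x ^ ((ρ + 1) / 2))).mul_const (exp (-F x / (2 * σ)))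
  refine h.congr_deriv ?_
  simp only [spaceFactor]
  ring

lemma hasDerivAt_spaceFactor (hx : x ≠ 0) (hF : HasDerivAt F (f x / x) x) :
    HasDerivAt (spaceFactor σ A ρ y F t)
      (spaceRate σ A ρ f t x * spaceFactor σ A ρ y F t x) x := by
  have hlin := (((hasDerivAt_id' x).add_const y).const_mul (cothCoeff σ A t)).fun_neg.exp
  have hpow := Real.hasDerivAt_rpow_const (p := (ρ + 1) / 2) (Or.inl hx)
  have hF' := (hF.fun_neg.div_const (2 * σ)).exp
  refine ((hlin.fun_mul hpow).fun_mul hF').congr_deriv ?_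
  rw [Real.rpow_sub_one hx]
  simp only [spaceFactor, spaceRate]
  field_simp
  ring

lemma hasDerivAt_spaceRate (hσ : σ ≠ 0) (hx : x ≠ 0) (hf : DifferentiableAt ℝ f x) :
    HasDerivAt (spaceRate σ A ρ f t)
      (-(ρ + 1) / (2 * x ^ 2) - (deriv f x * x - f x) / (2 * σ * x ^ 2)) x := by
  have h1 := (hasDerivAt_id x).const_mul 2 |>.inv (by simp [hx]) |>.const_mul (ρ + 1)
  have h2 := hf.hasDerivAt.div ((hasDerivAt_id x).const_mul (2 * σ)) (by simp [hσ, hx])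
  refine ((h1.sub_const (cothCoeff σ A t)).sub h2).congr_deriv ?_
  simp only [id]
  field_simp

noncomputable def kernel (σ A B ρ y : ℝ) (F : ℝ → ℝ) (t x : ℝ) : ℝ :=
  timeFactor σ A B ρ y t * spaceFactor σ A ρ y F t x * besselSeries ρ (besselScale σ A y t * x)

noncomputable def kernelDt (σ A B ρ y : ℝ) (F : ℝ → ℝ) (t x : ℝ) : ℝ :=
  timeFactor σ A B ρ y t * spaceFactor σ A ρ y F t x *
    ((-((1 + ρ) * σ * cothCoeff σ A t + B / (2 * σ)) + cschSqCoeff σ A t * (x + y))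
        * besselSeries ρ (besselScale σ A y t * x)
      - 2 * σ * cothCoeff σ A t * besselScale σ A y t * x
        * besselSeries (ρ + 1) (besselScale σ A y t * x))

noncomputable def kernelDx (σ A B ρ y : ℝ) (f F : ℝ → ℝ) (t x : ℝ) : ℝ :=
  timeFactor σ A B ρ y t * spaceFactor σ A ρ y F t x *
    (spaceRate σ A ρ f t x * besselSeries ρ (besselScale σ A y t * x)
      + besselScale σ A y t * besselSeries (ρ + 1) (besselScale σ A y t * x))

noncomputable def kernelDxx (σ A B ρ y : ℝ) (f F : ℝ → ℝ) (t x : ℝ) : ℝ :=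
  timeFactor σ A B ρ y t * spaceFactor σ A ρ y F t x *
    ((spaceRate σ A ρ f t x ^ 2 - (ρ + 1) / (2 * x ^ 2) - (deriv f x * x - f x) / (2 * σ * x ^ 2))
        * besselSeries ρ (besselScale σ A y t * x)
      + 2 * spaceRate σ A ρ f t x * besselScale σ A y t
        * besselSeries (ρ + 1) (besselScale σ A y t * x)
      + besselScale σ A y t ^ 2 * besselSeries (ρ + 2) (besselScale σ A y t * x))

lemma hasDerivAt_besselSeries_mul (ρ c x : ℝ) :
    HasDerivAt (fun ξ => besselSeries ρ (c * ξ)) (c * besselSeries (ρ + 1) (c * x)) x :=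
  ((hasDerivAt_besselSeries ρ (c * x)).comp x ((hasDerivAt_id x).const_mul c)).congr_deriv
    (by simp [mul_comm])

lemma hasDerivAt_kernel_time (hσ : σ ≠ 0) (hA : 0 ≤ A) (hs : sinhHalf A t ≠ 0)
    (hγ : besselScale σ A y t ≠ 0) :
    HasDerivAt (fun τ => kernel σ A B ρ y F τ x) (kernelDt σ A B ρ y F t x) t := by
  have hG := (hasDerivAt_besselSeries ρ _).comp t
    ((hasDerivAt_besselScale (y := y) hσ hs).mul_const x)
  refine (((hasDerivAt_timeFactor (B := B) (ρ := ρ) hσ hs hγ).fun_mul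
    (hasDerivAt_spaceFactor_time (ρ := ρ) (y := y) (F := F) (x := x) hσ hA hs)).fun_mul hG)
    |>.congr_deriv ?_
  simp only [kernelDt, Function.comp_apply]
  ring

lemma hasDerivAt_kernel_space (hx : x ≠ 0) (hF : HasDerivAt F (f x / x) x) :
    HasDerivAt (kernel σ A B ρ y F t) (kernelDx σ A B ρ y f F t x) x := by
  refine (((hasDerivAt_spaceFactor hx hF).const_mul (timeFactor σ A B ρ y t)).fun_mul
    (hasDerivAt_besselSeries_mul ρ (besselScale σ A y t) x)).congr_deriv ?_
  simp only [kernelDx]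
  ring

lemma hasDerivAt_kernelDx (hσ : σ ≠ 0) (hx : x ≠ 0) (hf : DifferentiableAt ℝ f x)
    (hF : HasDerivAt F (f x / x) x) :
    HasDerivAt (kernelDx σ A B ρ y f F t) (kernelDxx σ A B ρ y f F t x) x := by
  have hG₁ := hasDerivAt_besselSeries_mul (ρ + 1) (besselScale σ A y t) x
  rw [add_assoc, one_add_one_eq_two] at hG₁
  refine (((hasDerivAt_spaceFactor hx hF).const_mul (timeFactor σ A B ρ y t)).fun_mul
    (((hasDerivAt_spaceRate (A := A) (ρ := ρ) (t := t) hσ hx hf).fun_mul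
      (hasDerivAt_besselSeries_mul ρ (besselScale σ A y t) x)).fun_add
      (hG₁.const_mul (besselScale σ A y t)))).congr_deriv ?_
  simp only [kernelDxx]
  ring

lemma kernelDt_eq (hσ : σ ≠ 0) (hA : 0 ≤ A) (hs : sinhHalf A t ≠ 0) (hx : x ≠ 0)
    (hRic : σ * x * deriv f x - σ * f x + (1 / 2) * f x ^ 2 = (1 / 2) * A * x ^ 2 + B * x + C)
    (hρ : ρ ^ 2 * σ ^ 2 = 2 * C + 4 * μ * σ + σ ^ 2) :
    kernelDt σ A B ρ y F t x = σ * x * kernelDxx σ A B ρ y f F t x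
      + f x * kernelDx σ A B ρ y f F t x - μ / x * kernel σ A B ρ y F t x := by
  have h := kernel_pde_coefficients hσ hx (cothCoeff_sq hσ hA hs) rfl rfl hRic hρ
    (besselSeries_eq_mul_add ρ (besselScale σ A y t * x))
  simp only [kernelDt, kernelDxx, kernelDx, kernel, besselScale, spaceRate] at h ⊢
  linear_combination timeFactor σ A B ρ y t * spaceFactor σ A ρ y F t x * h

lemma besselI_eq_besselSeries_besselScale (hσ : 0 < σ) (hA : 0 < A) (hy : 0 < y) (ht : 0 < t)
    (hx : 0 < x) (ρ : ℝ) :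
    besselI ρ (√(A * x * y) / (σ * sinhHalf A t))
      = besselScale σ A y t ^ (ρ / 2) * x ^ (ρ / 2) * besselSeries ρ (besselScale σ A y t * x) := by
  have hs := sinhHalf_pos hA ht
  have hsq : (√(A * x * y) / (σ * sinhHalf A t) / 2) ^ 2 = besselScale σ A y t * x := by
    rw [div_pow, div_pow, sq_sqrt (by positivity), besselScale, cschSqCoeff]
    field_simp
    ring
  have hz : 0 < √(A * x * y) / (σ * sinhHalf A t) := by positivity
  rw [besselI_eq_rpow_mul_besselSeries ρ hz, hsq,
    ← Real.mul_rpow (besselScale_pos hσ hA hy ht).le hx.le, ← hsq,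
    ← Real.rpow_natCast_mul (by positivity)]
  norm_num [mul_div_cancel₀]

lemma coth_div_eq_cothCoeff (σ A t : ℝ) :
    √A / (2 * σ * tanh (√A * t / 2)) = cothCoeff σ A t := by
  rw [tanh_eq_sinh_div_cosh, cothCoeff, sinhHalf]
  field_simp

lemma spaceFactor_eq_sqrt_mul (hx : 0 < x) :
    spaceFactor σ A ρ y F t x
      = exp (-(cothCoeff σ A t * (x + y))) * √x * x ^ (ρ / 2) * exp (-F x / (2 * σ)) := by
  rw [spaceFactor, sqrt_eq_rpow, mul_assoc _ (x ^ (1 / 2 : ℝ)), ← rpow_add hx]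
  ring_nf

lemma fundamentalSolution_eq_kernel (hσ : 0 < σ) (hA : 0 < A) (hy : 0 < y) (ht : 0 < t)
    (hx : 0 < x) (ν C₁ C₂ : ℝ) :
    (√A * exp ((F y - F x) / (2 * σ)) / (2 * σ * sinh (√A * t / 2))) * √(x / y)
        * exp (-B * t / (2 * σ) - √A * (x + y) / (2 * σ * tanh (√A * t / 2)))
        * (C₁ * besselI ν (√(A * x * y) / (σ * sinh (√A * t / 2)))
          + C₂ * besselI (-ν) (√(A * x * y) / (σ * sinh (√A * t / 2))))
      = √A * exp (F y / (2 * σ)) / (2 * σ * √y)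
          * (C₁ * kernel σ A B ν y F t x + C₂ * kernel σ A B (-ν) y F t x) := by
  have hs := sinhHalf_pos hA ht
  have hexp : -B * t / (2 * σ) - √A * (x + y) / (2 * σ * tanh (√A * t / 2))
      = -(B * t) / (2 * σ) + -(cothCoeff σ A t * (x + y)) := by
    rw [← coth_div_eq_cothCoeff]; ring
  have hF : (F y - F x) / (2 * σ) = F y / (2 * σ) + -F x / (2 * σ) := by ring
  rw [← sinhHalf, besselI_eq_besselSeries_besselScale hσ hA hy ht hx,
    besselI_eq_besselSeries_besselScale hσ hA hy ht hx, hexp, hF, exp_add, exp_add,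
    sqrt_div hx.le]
  simp only [kernel, timeFactor, spaceFactor_eq_sqrt_mul hx]
  field_simp

end Kernel

def SolvesAt (σ μ : ℝ) (f : ℝ → ℝ) (u : ℝ → ℝ → ℝ) (t x : ℝ) : Prop :=
  deriv (fun τ => u τ x) t
    = σ * x * deriv (deriv (fun ξ => u t ξ)) x + f x * deriv (fun ξ => u t ξ) x - μ / x * u t x

section SolvesAt

variable {σ μ t x : ℝ} {f : ℝ → ℝ} {u v : ℝ → ℝ → ℝ}

lemma solvesAt_of_hasDerivAt {ux : ℝ → ℝ} {ut uxx : ℝ}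
    (hut : HasDerivAt (fun τ => u τ x) ut t) (hux : ∀ᶠ ξ in 𝓝 x, HasDerivAt (u t) (ux ξ) ξ)
    (huxx : HasDerivAt ux uxx x) (h : ut = σ * x * uxx + f x * ux x - μ / x * u t x) :
    SolvesAt σ μ f u t x := by
  have hderiv : deriv (u t) =ᶠ[𝓝 x] ux := hux.mono fun ξ hξ => hξ.deriv
  rw [SolvesAt, hut.deriv, hderiv.deriv_eq, huxx.deriv, hderiv.eq_of_nhds, h]

lemma solvesAt_congr (huv : ∀ t > 0, ∀ x > 0, u t x = v t x) (ht : 0 < t) (hx : 0 < x) :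
    SolvesAt σ μ f u t x ↔ SolvesAt σ μ f v t x := by
  have htime : (fun τ => u τ x) =ᶠ[𝓝 t] fun τ => v τ x :=
    eventually_gt_nhds ht |>.mono fun τ hτ => huv τ hτ x hx
  have hspace : u t =ᶠ[𝓝 x] v t := eventually_gt_nhds hx |>.mono fun ξ hξ => huv t ht ξ hξ
  rw [SolvesAt, SolvesAt, htime.deriv_eq, hspace.deriv.deriv_eq, hspace.deriv_eq, huv t ht x hx]

end SolvesAt

lemma solvesAt_kernel_add {σ μ A B C ν y t x : ℝ} {f F : ℝ → ℝ} (hσ : 0 < σ) (hA : 0 < A)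
    (hy : 0 < y) (ht : 0 < t) (hx : 0 < x) (hf : DifferentiableAt ℝ f x)
    (hF : ∀ ξ > 0, HasDerivAt F (f ξ / ξ) ξ)
    (hRic : σ * x * deriv f x - σ * f x + (1 / 2) * f x ^ 2 = (1 / 2) * A * x ^ 2 + B * x + C)
    (hν : ν ^ 2 * σ ^ 2 = 2 * C + 4 * μ * σ + σ ^ 2) (c₁ c₂ : ℝ) :
    SolvesAt σ μ f
      (fun t x => c₁ * kernel σ A B ν y F t x + c₂ * kernel σ A B (-ν) y F t x) t x := by
  have hs := (sinhHalf_pos hA ht).ne'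
  have hγ := (besselScale_pos hσ hA hy ht).ne'
  refine solvesAt_of_hasDerivAt (ux := fun ξ => c₁ * kernelDx σ A B ν y f F t ξ
      + c₂ * kernelDx σ A B (-ν) y f F t ξ)
    (((hasDerivAt_kernel_time hσ.ne' hA.le hs hγ).const_mul c₁).fun_add
      ((hasDerivAt_kernel_time hσ.ne' hA.le hs hγ).const_mul c₂))
    ((eventually_gt_nhds hx).mono fun ξ hξ =>
      ((hasDerivAt_kernel_space hξ.ne' (hF ξ hξ)).const_mul c₁).fun_add
        ((hasDerivAt_kernel_space hξ.ne' (hF ξ hξ)).const_mul c₂))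
    (((hasDerivAt_kernelDx hσ.ne' hx.ne' hf (hF x hx)).const_mul c₁).fun_add
      ((hasDerivAt_kernelDx hσ.ne' hx.ne' hf (hF x hx)).const_mul c₂)) ?_
  rw [kernelDt_eq hσ.ne' hA.le hs hx.ne' hRic hν,
    kernelDt_eq hσ.ne' hA.le hs hx.ne' hRic (by rwa [neg_sq])]
  ring

theorem stmt_16_general (σ μ A B C ν : ℝ) (hσ : 0 < σ) (hA : 0 < A)
    (hC : 0 < 2 * C + 4 * μ * σ + σ ^ 2)
    (hν : ν = Real.sqrt (2 * C + 4 * μ * σ + σ ^ 2) / σ)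
    (f F : ℝ → ℝ)
    (hf : ∀ x > (0 : ℝ), DifferentiableAt ℝ f x)
    (hRic : ∀ x > (0 : ℝ),
      σ * x * deriv f x - σ * f x + (1 / 2) * (f x) ^ 2
        = (1 / 2) * A * x ^ 2 + B * x + C)
    (hF : ∀ x > (0 : ℝ), HasDerivAt F (f x / x) x)
    (y : ℝ) (hy : 0 < y) (C₁ C₂ : ℝ)
    (p : ℝ → ℝ → ℝ)
    (hp : ∀ t x, p t x =
      (Real.sqrt A * Real.exp ((F y - F x) / (2 * σ))
          / (2 * σ * Real.sinh (Real.sqrt A * t / 2)))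
        * Real.sqrt (x / y)
        * Real.exp (-B * t / (2 * σ)
            - Real.sqrt A * (x + y) / (2 * σ * Real.tanh (Real.sqrt A * t / 2)))
        * (C₁ * besselI ν (Real.sqrt (A * x * y) / (σ * Real.sinh (Real.sqrt A * t / 2)))
          + C₂ * besselI (-ν)
              (Real.sqrt (A * x * y) / (σ * Real.sinh (Real.sqrt A * t / 2))))) :
    ∀ t > (0 : ℝ), ∀ x > (0 : ℝ),
      deriv (fun τ => p τ x) t
        = σ * x * deriv (deriv (fun ξ => p t ξ)) x
          + f x * deriv (fun ξ => p t ξ) x - (μ / x) * p t x := by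
  intro t ht x hx
  set K := √A * exp (F y / (2 * σ)) / (2 * σ * √y)
  have hν2 : ν ^ 2 * σ ^ 2 = 2 * C + 4 * μ * σ + σ ^ 2 := by
    rw [hν, div_pow, sq_sqrt hC.le, div_mul_cancel₀ _ (by positivity)]
  have hpK : ∀ t > 0, ∀ x > 0,
      p t x = K * C₁ * kernel σ A B ν y F t x + K * C₂ * kernel σ A B (-ν) y F t x := by
    intro t ht x hx
    rw [hp, fundamentalSolution_eq_kernel hσ hA hy ht hx]
    ring
  exact (solvesAt_congr hpK ht hx).2 <|
    solvesAt_kernel_add hσ hA hy ht hx (hf x hx) hF (hRic x hx) hν2 _ _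

/-- The fundamental solution formula of Theorem 5.7 for the PDE
`u_t = σ x u_xx + f(x) u_x - (μ/x) u` when the drift `f` solves the Riccati equation
`σ x f' - σ f + f²/2 = (1/2)Ax² + Bx + C` with `A > 0`. -/
theorem stmt_16 (σ μ A B C ν : ℝ) (hσ : 0 < σ) (hμ : 0 ≤ μ) (hA : 0 < A)
    (hC : 0 < 2 * C + 4 * μ * σ + σ ^ 2)
    (hν : ν = Real.sqrt (2 * C + 4 * μ * σ + σ ^ 2) / σ) (hνint : ∀ n : ℤ, ν ≠ (n : ℝ))
    (f F : ℝ → ℝ)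
    (hf : ∀ x > (0 : ℝ), DifferentiableAt ℝ f x)
    (hRic : ∀ x > (0 : ℝ),
      σ * x * deriv f x - σ * f x + (1 / 2) * (f x) ^ 2
        = (1 / 2) * A * x ^ 2 + B * x + C)
    (hF : ∀ x > (0 : ℝ), HasDerivAt F (f x / x) x)
    (y : ℝ) (hy : 0 < y) (C₁ C₂ : ℝ)
    (p : ℝ → ℝ → ℝ)
    (hp : ∀ t x, p t x =
      (Real.sqrt A * Real.exp ((F y - F x) / (2 * σ))
          / (2 * σ * Real.sinh (Real.sqrt A * t / 2)))
        * Real.sqrt (x / y)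
        * Real.exp (-B * t / (2 * σ)
            - Real.sqrt A * (x + y) / (2 * σ * Real.tanh (Real.sqrt A * t / 2)))
        * (C₁ * besselI ν (Real.sqrt (A * x * y) / (σ * Real.sinh (Real.sqrt A * t / 2)))
          + C₂ * besselI (-ν)
              (Real.sqrt (A * x * y) / (σ * Real.sinh (Real.sqrt A * t / 2))))) :
    ∀ t > (0 : ℝ), ∀ x > (0 : ℝ),
      deriv (fun τ => p τ x) t
        = σ * x * deriv (deriv (fun ξ => p t ξ)) x
          + f x * deriv (fun ξ => p t ξ) x - (μ / x) * p t x :=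
  stmt_16_general σ μ A B C ν hσ hA hC hν f F hf hRic hF y hy C₁ C₂ p hp
end

section
/- Let σ > 0, a > 0, b > 0, μ ≥ 0, and set ν = (1/σ)√((a−σ)² + 4μσ), k = a/(2σ). For t > 0, x > 0, set α = (b/(2σ))(1 + coth(bt/2)) + λ and β = b√x/(2σ sinh(bt/2)), where λ ≥ 0. Then, with p(t,x,y) = ( b/(2σ sinh(bt/2)) ) (y/x)^{a/(2σ) − 1/2} exp( (b/(2σ)) ( at + (x−y) − (x+y)/tanh(bt/2) ) ) I_ν( b√(xy)/(σ sinh(bt/2)) ), one has ∫_0^∞ e^{−λ y} p(t,x,y) dy = ( Γ(k + ν/2 + 1/2)/Γ(ν+1) ) · β x^{−k} · exp( (b/(2σ)) ( at + x − x/tanh(bt/2) ) ) · (1/(β α^k)) e^{β²/(2α)} M_{−k, ν/2}( β²/α ). -/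
/-!
Expanding `I_ν` in its power series turns `y ^ (k - 1/2) * exp (-α y) * I_ν (2 β √y)` into a series
of Gamma integrands `c_m * y ^ (A + m - 1) * exp (-α y)` with `c_m ≥ 0` and `A = k + ν/2 + 1/2`.
Termwise integration is legitimate because the integrals `c_m Γ(A + m) / α ^ (A + m)` are,
up to a common factor `Γ(A) β^ν / (Γ(ν + 1) α^A)`, the terms of the Kummer series
`₁F₁(A, ν + 1, β²/α)`, which converges since `(A + i)/(ν + 1 + i)` is bounded. The Whittaker
function is this Kummer function times `z ^ (ν/2 + 1/2) * exp (-z/2)`. The CIR kernel itself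
becomes such an integrand once all terms of the exponent that are linear in `y` are collected
into `-α y`.
-/

open Real MeasureTheory

/-- Kummer's confluent hypergeometric function
`₁F₁(a,b,z) = ∑_{k=0}^∞ ((a)_k/(b)_k) zᵏ/k!`. -/
noncomputable def hyp1F1 (a b z : ℝ) : ℝ :=
  ∑' k : ℕ, ((∏ i ∈ Finset.range k, (a + (i : ℝ))) / (∏ i ∈ Finset.range k, (b + (i : ℝ))))
      * z ^ k / (Nat.factorial k : ℝ)

/-- The Whittaker function of the first kind
`M_{s,r}(z) = z^{r+1/2} e^{-z/2} ₁F₁(r - s + 1/2, 1 + 2r, z)`. -/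
noncomputable def whittakerM (s r z : ℝ) : ℝ :=
  z ^ (r + 1 / 2) * Real.exp (-z / 2) * hyp1F1 (r - s + 1 / 2) (1 + 2 * r) z

open Set
open scoped Nat

lemma Real.Gamma_add_nat_eq_mul_prod {a : ℝ} (ha : ∀ n : ℕ, a ≠ -n) (m : ℕ) :
    Gamma (a + m) = Gamma a * ∏ i ∈ Finset.range m, (a + i) := by
  induction m with
  | zero => simp
  | succ n ih =>
    have hn : a + n ≠ 0 := fun h => ha n (by linarith)
    rw [Nat.cast_succ, ← add_assoc, Gamma_add_one hn, ih, Finset.prod_range_succ]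
    ring

lemma summable_hyp1F1_term {a b z : ℝ} (ha : 0 ≤ a) (hb : 0 < b) (hz : 0 ≤ z) :
    Summable fun m : ℕ =>
      (∏ i ∈ Finset.range m, (a + i)) / (∏ i ∈ Finset.range m, (b + i)) * z ^ m / m ! := by
  have hratio (i : ℕ) : (a + i) / (b + i) ≤ a / b + 1 := by
    rw [div_le_iff₀ (by positivity)]
    have : 0 ≤ a / b * i := by positivity
    nlinarith [div_mul_cancel₀ a hb.ne']
  refine (Real.summable_pow_div_factorial ((a / b + 1) * z)).of_nonneg_of_le
    (fun m => by positivity) (fun m => ?_)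
  rw [← Finset.prod_div_distrib, mul_pow]
  gcongr
  calc ∏ i ∈ Finset.range m, (a + i) / (b + i)
      ≤ ∏ _i ∈ Finset.range m, (a / b + 1) :=
        Finset.prod_le_prod (fun i _ => by positivity) (fun i _ => hratio i)
    _ = (a / b + 1) ^ m := by simp

lemma hasSum_Gamma_div_Gamma_mul_pow_div_factorial {a b z : ℝ} (ha : 0 < a) (hb : 0 < b)
    (hz : 0 ≤ z) :
    HasSum (fun m : ℕ => Gamma (a + m) / Gamma (b + m) * z ^ m / m !)
      (Gamma a / Gamma b * hyp1F1 a b z) := by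
  have hΓa := Gamma_pos_of_pos ha
  have hΓb := Gamma_pos_of_pos hb
  refine ((summable_hyp1F1_term ha.le hb hz).hasSum.mul_left (Gamma a / Gamma b)).congr_fun
    fun m => ?_
  rw [Gamma_add_nat_eq_mul_prod (fun n => by linarith [n.cast_nonneg (α := ℝ)]),
    Gamma_add_nat_eq_mul_prod (fun n => by linarith [n.cast_nonneg (α := ℝ)])]
  field_simp

lemma integral_tsum_mul_rpow_mul_exp_neg_mul {s α : ℝ} (hs : 0 < s) (hα : 0 < α) {c : ℕ → ℝ}
    (hc : Summable fun m : ℕ => |c m| * ((1 / α) ^ (s + m) * Gamma (s + m))) :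
    ∫ y in Ioi 0, ∑' m : ℕ, c m * (y ^ (s + m - 1) * exp (-(α * y)))
      = ∑' m : ℕ, c m * ((1 / α) ^ (s + m) * Gamma (s + m)) := by
  have hsm (m : ℕ) : 0 < s + m := by positivity
  have hint (m : ℕ) := integral_rpow_mul_exp_neg_mul_Ioi (hsm m) hα
  have hintegrable (m : ℕ) :
      IntegrableOn (fun y : ℝ => y ^ (s + m - 1) * exp (-(α * y))) (Ioi 0) := by
    simpa [neg_mul] using
      integrableOn_rpow_mul_exp_neg_mul_rpow (p := 1) (by linarith [hsm m]) one_pos hα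
  have hnorm (m : ℕ) : ∫ y in Ioi 0, ‖c m * (y ^ (s + m - 1) * exp (-(α * y)))‖
      = |c m| * ((1 / α) ^ (s + m) * Gamma (s + m)) := by
    rw [← hint, ← integral_const_mul]
    refine setIntegral_congr_fun measurableSet_Ioi fun y (hy : 0 < y) => ?_
    rw [norm_mul, Real.norm_eq_abs, Real.norm_of_nonneg (by positivity)]
  rw [← integral_tsum_of_summable_integral_norm (fun m => (hintegrable m).const_mul (c m))
    (by simpa only [hnorm] using hc)]
  simp_rw [integral_const_mul, hint]

lemma besselI_two_mul_mul_sqrt {ν β y : ℝ} (hβ : 0 < β) (hy : 0 < y) :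
    besselI ν (2 * β * √y)
      = ∑' m : ℕ, β ^ (2 * (m : ℝ) + ν) / (m ! * Gamma (m + ν + 1)) * y ^ (ν / 2 + m) := by
  refine tsum_congr fun m => ?_
  rw [show 2 * β * √y / 2 = β * y ^ (1 / 2 : ℝ) by rw [sqrt_eq_rpow]; ring,
    mul_rpow hβ.le (by positivity), ← rpow_mul hy.le]
  ring_nf

theorem integral_rpow_mul_exp_neg_mul_besselI {s ν α β : ℝ} (hν : -1 < ν) (hs : 0 < s + ν / 2)
    (hα : 0 < α) (hβ : 0 < β) :
    ∫ y in Ioi 0, y ^ (s - 1) * exp (-(α * y)) * besselI ν (2 * β * √y)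
      = Gamma (s + ν / 2) / Gamma (ν + 1) * β ^ ν * (1 / α) ^ (s + ν / 2)
        * hyp1F1 (s + ν / 2) (ν + 1) (β ^ 2 / α) := by
  set A := s + ν / 2
  set c : ℕ → ℝ := fun m => β ^ (2 * (m : ℝ) + ν) / (m ! * Gamma (m + ν + 1))
  have hc (m : ℕ) : 0 ≤ c m := by
    have := Gamma_pos_of_pos (show 0 < (m : ℝ) + ν + 1 by linarith [m.cast_nonneg (α := ℝ)])
    positivity
  have hterm (m : ℕ) : c m * ((1 / α) ^ (A + m) * Gamma (A + m))
      = β ^ ν * (1 / α) ^ A * (Gamma (A + m) / Gamma (ν + 1 + m) * (β ^ 2 / α) ^ m / m !) := by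
    simp only [c]
    rw [show 2 * (m : ℝ) + ν = ν + (2 * m : ℕ) by push_cast; ring, rpow_add hβ,
      rpow_add (by positivity), rpow_natCast, rpow_natCast, add_right_comm ν 1, add_comm (m : ℝ)]
    ring
  have hF := hasSum_Gamma_div_Gamma_mul_pow_div_factorial hs (by linarith : 0 < ν + 1)
    (by positivity : 0 ≤ β ^ 2 / α)
  have hexpand : ∀ y ∈ Ioi (0 : ℝ), y ^ (s - 1) * exp (-(α * y)) * besselI ν (2 * β * √y)
      = ∑' m : ℕ, c m * (y ^ (A + m - 1) * exp (-(α * y))) := fun y (hy : 0 < y) => by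
    rw [besselI_two_mul_mul_sqrt hβ hy, mul_comm, ← tsum_mul_right]
    refine tsum_congr fun m => ?_
    rw [show A + m - 1 = (s - 1) + (ν / 2 + m) by ring, rpow_add hy (s - 1)]
    ring
  calc _ = ∫ y in Ioi 0, ∑' m : ℕ, c m * (y ^ (A + m - 1) * exp (-(α * y))) :=
        setIntegral_congr_fun measurableSet_Ioi hexpand
    _ = ∑' m : ℕ, c m * ((1 / α) ^ (A + m) * Gamma (A + m)) := by
        refine integral_tsum_mul_rpow_mul_exp_neg_mul hs hα ?_
        simp_rw [abs_of_nonneg (hc _), hterm]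
        exact hF.summable.mul_left _
    _ = β ^ ν * (1 / α) ^ A * (Gamma A / Gamma (ν + 1) * hyp1F1 A (ν + 1) (β ^ 2 / α)) := by
        simp_rw [hterm]
        exact (hF.mul_left _).tsum_eq
    _ = _ := by ring

lemma rpow_mul_hyp1F1_eq_whittakerM {α β : ℝ} (hα : 0 < α) (hβ : 0 < β) (k ν : ℝ) :
    β ^ ν * (1 / α) ^ (k + ν / 2 + 1 / 2) * hyp1F1 (k + ν / 2 + 1 / 2) (ν + 1) (β ^ 2 / α)
      = 1 / (β * α ^ k) * exp (β ^ 2 / (2 * α)) * whittakerM (-k) (ν / 2) (β ^ 2 / α) := by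
  have hexp : exp (-(β ^ 2 / α) / 2) = (exp (β ^ 2 / (2 * α)))⁻¹ := by
    rw [← exp_neg]; ring_nf
  have hpow : (β ^ 2 / α) ^ (ν / 2 + 1 / 2) = β ^ ν * β / α ^ (ν / 2 + 1 / 2) := by
    rw [div_rpow (by positivity) hα.le, ← rpow_natCast, ← rpow_mul hβ.le,
      show ((2 : ℕ) : ℝ) * (ν / 2 + 1 / 2) = ν + 1 by push_cast; ring, rpow_add hβ, rpow_one]
  have hsplit : (1 / α) ^ (k + ν / 2 + 1 / 2) = 1 / (α ^ k * α ^ (ν / 2 + 1 / 2)) := by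
    rw [one_div, inv_rpow hα.le, add_assoc, rpow_add hα, ← one_div]
  rw [whittakerM, show ν / 2 - -k + 1 / 2 = k + ν / 2 + 1 / 2 by ring,
    show 1 + 2 * (ν / 2) = ν + 1 by ring, hsplit, hpow, hexp]
  field_simp

lemma exp_neg_mul_mul_cirKernel {σ a b t k ν x y lam α β : ℝ}
    (hx : 0 < x) (hy : 0 < y)
    (hα : α = (b / (2 * σ)) * (1 + cosh (b * t / 2) / sinh (b * t / 2)) + lam)
    (hβ : β = b * √x / (2 * σ * sinh (b * t / 2))) :
    exp (-lam * y) * ((b / (2 * σ * sinh (b * t / 2))) * (y / x) ^ (k - 1 / 2)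
        * exp ((b / (2 * σ)) * (a * t + (x - y) - (x + y) / tanh (b * t / 2)))
        * besselI ν (b * √(x * y) / (σ * sinh (b * t / 2))))
      = β * x ^ (-k) * exp ((b / (2 * σ)) * (a * t + x - x / tanh (b * t / 2)))
        * (y ^ (k + 1 / 2 - 1) * exp (-(α * y)) * besselI ν (2 * β * √y)) := by
  have hexp :
      exp (-lam * y) * exp ((b / (2 * σ)) * (a * t + (x - y) - (x + y) / tanh (b * t / 2)))
      = exp ((b / (2 * σ)) * (a * t + x - x / tanh (b * t / 2))) * exp (-(α * y)) := by
    rw [← exp_add, ← exp_add, hα, tanh_eq_sinh_div_cosh, div_div_eq_mul_div, div_div_eq_mul_div]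
    ring_nf
  have hpow : (y / x) ^ (k - 1 / 2) = √x * x ^ (-k) * y ^ (k + 1 / 2 - 1) := by
    rw [div_rpow hy.le hx.le, sqrt_eq_rpow, ← rpow_add hx, div_eq_mul_inv, ← rpow_neg hx.le]
    ring_nf
  have hβ' : b / (2 * σ * sinh (b * t / 2)) * √x = β := by
    rw [hβ]; ring
  have harg : b * √(x * y) / (σ * sinh (b * t / 2)) = 2 * β * √y := by
    rw [sqrt_mul hx.le, hβ]
    field_simp
  rw [hpow, harg]
  linear_combination
    (x ^ (-k) * y ^ (k + 1 / 2 - 1) * besselI ν (2 * β * √y) * (b / (2 * σ * sinh (b * t / 2)))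
      * √x) * hexp
    + (x ^ (-k) * y ^ (k + 1 / 2 - 1) * besselI ν (2 * β * √y)
      * exp ((b / (2 * σ)) * (a * t + x - x / tanh (b * t / 2))) * exp (-(α * y))) * hβ'

theorem stmt_17_general (σ a b μ ν k t x lam α β : ℝ)
    (hσ : 0 < σ) (ha : 0 < a) (hb : 0 < b)
    (hν : ν = (1 / σ) * Real.sqrt ((a - σ) ^ 2 + 4 * μ * σ))
    (hk : k = a / (2 * σ))
    (ht : 0 < t) (hx : 0 < x) (hlam : 0 ≤ lam)
    (hα : α = (b / (2 * σ)) * (1 + Real.cosh (b * t / 2) / Real.sinh (b * t / 2)) + lam)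
    (hβ : β = b * Real.sqrt x / (2 * σ * Real.sinh (b * t / 2)))
    (p : ℝ → ℝ)
    (hp : ∀ y, p y = (b / (2 * σ * Real.sinh (b * t / 2)))
        * (y / x) ^ (a / (2 * σ) - 1 / 2)
        * Real.exp ((b / (2 * σ))
            * (a * t + (x - y) - (x + y) / Real.tanh (b * t / 2)))
        * besselI ν (b * Real.sqrt (x * y) / (σ * Real.sinh (b * t / 2)))) :
    (∫ y in Set.Ioi (0 : ℝ), Real.exp (-lam * y) * p y)
      = (Real.Gamma (k + ν / 2 + 1 / 2) / Real.Gamma (ν + 1)) * β * x ^ (-k)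
        * Real.exp ((b / (2 * σ)) * (a * t + x - x / Real.tanh (b * t / 2)))
        * (1 / (β * α ^ k)) * Real.exp (β ^ 2 / (2 * α))
        * whittakerM (-k) (ν / 2) (β ^ 2 / α) := by
  have hsinh : 0 < sinh (b * t / 2) := sinh_pos_iff.2 (by positivity)
  have hν0 : 0 ≤ ν := hν ▸ by positivity
  have hk0 : 0 < k := hk ▸ by positivity
  have hα0 : 0 < α := hα ▸ by positivity
  have hβ0 : 0 < β := hβ ▸ by positivity
  have hintegrand : ∀ y ∈ Ioi (0 : ℝ), exp (-lam * y) * p y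
      = β * x ^ (-k) * exp ((b / (2 * σ)) * (a * t + x - x / tanh (b * t / 2)))
        * (y ^ (k + 1 / 2 - 1) * exp (-(α * y)) * besselI ν (2 * β * √y)) :=
    fun y (hy : 0 < y) => by
      rw [hp, ← hk]
      exact exp_neg_mul_mul_cirKernel hx hy hα hβ
  rw [setIntegral_congr_fun measurableSet_Ioi hintegrand, integral_const_mul,
    integral_rpow_mul_exp_neg_mul_besselI (by linarith) (by positivity) hα0 hβ0,
    add_right_comm k]
  linear_combination (Gamma (k + ν / 2 + 1 / 2) / Gamma (ν + 1) * β * x ^ (-k)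
    * exp ((b / (2 * σ)) * (a * t + x - x / tanh (b * t / 2))))
    * rpow_mul_hyp1F1_eq_whittakerM hα0 hβ0 k ν

/-- Corollary 5.9: the expectation
`E_x(exp(-λX_t - μ ∫_0^t X_s^{-1} ds))` for the CIR process, computed by Laplace
transforming the fundamental solution (5.20). -/
theorem stmt_17 (σ a b μ ν k t x lam α β : ℝ)
    (hσ : 0 < σ) (ha : 0 < a) (hb : 0 < b) (hμ : 0 ≤ μ)
    (hν : ν = (1 / σ) * Real.sqrt ((a - σ) ^ 2 + 4 * μ * σ))
    (hk : k = a / (2 * σ))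
    (ht : 0 < t) (hx : 0 < x) (hlam : 0 ≤ lam)
    (hα : α = (b / (2 * σ)) * (1 + Real.cosh (b * t / 2) / Real.sinh (b * t / 2)) + lam)
    (hβ : β = b * Real.sqrt x / (2 * σ * Real.sinh (b * t / 2)))
    (p : ℝ → ℝ)
    (hp : ∀ y, p y = (b / (2 * σ * Real.sinh (b * t / 2)))
        * (y / x) ^ (a / (2 * σ) - 1 / 2)
        * Real.exp ((b / (2 * σ))
            * (a * t + (x - y) - (x + y) / Real.tanh (b * t / 2)))
        * besselI ν (b * Real.sqrt (x * y) / (σ * Real.sinh (b * t / 2)))) :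
    (∫ y in Set.Ioi (0 : ℝ), Real.exp (-lam * y) * p y)
      = (Real.Gamma (k + ν / 2 + 1 / 2) / Real.Gamma (ν + 1)) * β * x ^ (-k)
        * Real.exp ((b / (2 * σ)) * (a * t + x - x / Real.tanh (b * t / 2)))
        * (1 / (β * α ^ k)) * Real.exp (β ^ 2 / (2 * α))
        * whittakerM (-k) (ν / 2) (β ^ 2 / α) :=
  stmt_17_general σ a b μ ν k t x lam α β hσ ha hb hν hk ht hx hlam hα hβ p hp
end
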